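/- Let k be a symmetric 3×3 real matrix and r > 0. Let S_r be the sphere of radius r centered at the origin in ℝ³ with surface measure μ, with outward unit normal ν = x/r, mean curvature H = 2/r, and P(x) = tr k − ⟨kν, ν⟩. Then the Hawking energy 𝓔(S_r) := √(μ(S_r)/(16π)) · ( 1 − (1/(16π)) ∫_{S_r} (H² − P²) dμ ) satisfies exactly 𝓔(S_r) = (r³/12) ( (3/5)(tr k)² + (1/5)‖k‖² ), where ‖k‖² = Σ_{i,j} k_{ij}². -/

import Mathlib

open MeasureTheory Real

/-- The surface measure on the unit sphere `𝕊² ⊂ ℝ³`, viewed as a measure on the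
ambient space `ℝ³` supported on the sphere (induced from Lebesgue measure). -/
noncomputable def sphereMeasure2 : Measure (EuclideanSpace ℝ (Fin 3)) :=
  Measure.map Subtype.val ((volume : Measure (EuclideanSpace ℝ (Fin 3))).toSphere)

/-- The surface measure on the sphere of radius `r` centered at the origin in `ℝ³`
(induced from Lebesgue measure): the pushforward under `x ↦ r • x` of `r²` times the
surface measure of the unit sphere. -/
noncomputable def sphereMeasureR (r : ℝ) : Measure (EuclideanSpace ℝ (Fin 3)) :=
  Measure.map (fun x => r • x) (ENNReal.ofReal (r ^ 2) • sphereMeasure2)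

/-- The trace of `k` restricted to the tangent plane of `S_r` at `x`:
`P(x) = tr k − ⟨kν, ν⟩` with `ν = x/r`. -/
noncomputable def traceRestricted (k : Matrix (Fin 3) (Fin 3) ℝ) (r : ℝ)
    (x : EuclideanSpace ℝ (Fin 3)) : ℝ :=
  k.trace - ∑ i, ∑ j, k i j * (x i / r) * (x j / r)

/-- The Hawking energy of the round sphere `S_r` in flat initial data `(ℝ³, δ, k)` with
constant second fundamental form `k`, where `H = 2/r`:
`𝓔(S_r) = √(|S_r|/(16π)) (1 − (1/(16π)) ∫_{S_r} (H² − P²) dμ)`. -/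
noncomputable def hawkingEnergy (k : Matrix (Fin 3) (Fin 3) ℝ) (r : ℝ) : ℝ :=
  Real.sqrt ((sphereMeasureR r Set.univ).toReal / (16 * π)) *
    (1 - 1 / (16 * π) *
      ∫ x, ((2 / r) ^ 2 - (traceRestricted k r x) ^ 2) ∂(sphereMeasureR r))

/-! After scaling `S_r` to the unit sphere, the Hawking energy only involves the integrals over
`S²` of `1`, of `Q(x) = ⟨k x, x⟩` and of `Q²`, that is, the second and fourth moments of the
coordinates: `∫ xᵢxⱼ = (4π/3) δᵢⱼ` and `∫ xᵢxⱼxₗxₘ = (4π/15) (δᵢⱼδₗₘ + δᵢₗδⱼₘ + δᵢₘδⱼₗ)`.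
These come from Gaussian integrals: in polar coordinates the Gaussian integral of a
homogeneous function of degree `n` on `ℝᵈ` is its integral over the sphere times
`Γ((n + d)/2)/2`, while in Cartesian coordinates the Gaussian integral of a monomial splits into
one-dimensional moments `∫ tᵐ e^{-t²} dt`. -/

open Set Metric

noncomputable def gaussianMoment (n : ℕ) : ℝ := ∫ t : ℝ, t ^ n * rexp (-t ^ 2)

lemma integral_Ioi_pow_mul_exp_neg_sq (n : ℕ) :
    ∫ t in Ioi (0 : ℝ), t ^ n * rexp (-t ^ 2) = Gamma ((n + 1) / 2) / 2 := by
  rw [div_eq_inv_mul, ← one_div, ← integral_rpow_mul_exp_neg_rpow two_pos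
    (neg_one_lt_zero.trans_le n.cast_nonneg)]
  refine setIntegral_congr_fun measurableSet_Ioi fun t _ => ?_
  rw [← rpow_natCast, ← rpow_two]

lemma gaussianMoment_of_even {n : ℕ} (hn : Even n) :
    gaussianMoment n = Gamma ((n + 1) / 2) := by
  calc gaussianMoment n = ∫ t : ℝ, |t| ^ n * rexp (-|t| ^ 2) := by
        simp only [gaussianMoment, hn.pow_abs, sq_abs]
    _ = Gamma ((n + 1) / 2) := by
        rw [integral_comp_abs (f := fun t => t ^ n * rexp (-t ^ 2)),
          integral_Ioi_pow_mul_exp_neg_sq]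
        ring

lemma gaussianMoment_of_odd {n : ℕ} (hn : Odd n) : gaussianMoment n = 0 := by
  have h := integral_neg_eq_self (fun t : ℝ => t ^ n * rexp (-t ^ 2)) volume
  simp only [hn.neg_pow, neg_sq, neg_mul, integral_neg] at h
  rw [gaussianMoment]
  linarith

lemma Gamma_three_halves : Gamma (3 / 2) = √π / 2 := by
  rw [show (3 / 2 : ℝ) = 1 / 2 + 1 by norm_num, Gamma_add_one (by norm_num), Gamma_one_half_eq]
  ring

lemma Gamma_five_halves : Gamma (5 / 2) = 3 * √π / 4 := by
  rw [show (5 / 2 : ℝ) = 3 / 2 + 1 by norm_num, Gamma_add_one (by norm_num), Gamma_three_halves]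
  ring

lemma Gamma_seven_halves : Gamma (7 / 2) = 15 * √π / 8 := by
  rw [show (7 / 2 : ℝ) = 5 / 2 + 1 by norm_num, Gamma_add_one (by norm_num), Gamma_five_halves]
  ring

lemma gaussianMoment_zero : gaussianMoment 0 = √π := by
  rw [gaussianMoment_of_even Even.zero]
  norm_num [Gamma_one_half_eq]

lemma gaussianMoment_one : gaussianMoment 1 = 0 := gaussianMoment_of_odd odd_one

lemma gaussianMoment_two : gaussianMoment 2 = √π / 2 := by
  rw [gaussianMoment_of_even even_two]
  norm_num [Gamma_three_halves]

lemma gaussianMoment_three : gaussianMoment 3 = 0 := gaussianMoment_of_odd (by decide)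

lemma gaussianMoment_four : gaussianMoment 4 = 3 * √π / 4 := by
  rw [gaussianMoment_of_even (by decide)]
  norm_num [Gamma_five_halves]

lemma sqrt_pi_pow_three : √π ^ 3 = π * √π := by
  rw [pow_succ, sq_sqrt pi_nonneg]

section PolarCoordinates

variable {E : Type*} [NormedAddCommGroup E] [NormedSpace ℝ E] [FiniteDimensional ℝ E]
  [MeasurableSpace E] [BorelSpace E] (μ : Measure E) [μ.IsAddHaarMeasure]

lemma integral_volumeIoiPow_pow_mul_exp_neg_sq (m n : ℕ) :
    ∫ t, (t : ℝ) ^ n * rexp (-(t : ℝ) ^ 2) ∂Measure.volumeIoiPow m =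
      Gamma ((n + m + 1) / 2) / 2 := by
  simp only [Measure.volumeIoiPow, ENNReal.ofReal]
  rw [integral_withDensity_eq_integral_smul
      (measurable_subtype_coe.pow_const m).real_toNNReal,
    integral_subtype_comap measurableSet_Ioi
      (fun t : ℝ => (t ^ m).toNNReal • (t ^ n * rexp (-t ^ 2))),
    show ((n : ℝ) + m + 1) = ((n + m : ℕ) : ℝ) + 1 by push_cast; ring,
    ← integral_Ioi_pow_mul_exp_neg_sq]
  refine setIntegral_congr_fun measurableSet_Ioi fun t ht => ?_
  rw [NNReal.smul_def, Real.coe_toNNReal _ (pow_nonneg (le_of_lt ht) m), smul_eq_mul]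
  ring

theorem integral_mul_exp_neg_norm_sq_of_homogeneous [Nontrivial E] {g : E → ℝ} {n : ℕ}
    (hg : ∀ c : ℝ, 0 < c → ∀ x, g (c • x) = c ^ n * g x) :
    ∫ x, g x * rexp (-‖x‖ ^ 2) ∂μ =
      (∫ ω, g ω ∂μ.toSphere) * (Gamma ((n + Module.finrank ℝ E) / 2) / 2) := by
  have hpolar := (μ.measurePreserving_homeomorphUnitSphereProd).integral_comp
    (Homeomorph.measurableEmbedding _)
    (fun p : sphere (0 : E) 1 × Ioi (0 : ℝ) => g p.1 * ((p.2 : ℝ) ^ n * rexp (-(p.2 : ℝ) ^ 2)))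
  rw [integral_prod_mul (fun ω : sphere (0 : E) 1 => g ω)
      (fun t : Ioi (0 : ℝ) => (t : ℝ) ^ n * rexp (-(t : ℝ) ^ 2)),
    integral_volumeIoiPow_pow_mul_exp_neg_sq,
    Nat.cast_pred Module.finrank_pos, add_sub_assoc', sub_add_cancel] at hpolar
  calc ∫ x, g x * rexp (-‖x‖ ^ 2) ∂μ = ∫ x in {0}ᶜ, g x * rexp (-‖x‖ ^ 2) ∂μ := by
        rw [restrict_compl_singleton]
    _ = ∫ x : ({0}ᶜ : Set E), g x * rexp (-‖(x : E)‖ ^ 2) ∂μ.comap Subtype.val :=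
        (integral_subtype_comap (measurableSet_singleton 0).compl _).symm
    _ = _ := by
        rw [← hpolar]
        refine integral_congr_ae (Filter.Eventually.of_forall fun x => ?_)
        have hx : 0 < ‖(x : E)‖ := norm_pos_iff.2 x.2
        simp only [homeomorphUnitSphereProd_apply_fst_coe, homeomorphUnitSphereProd_apply_snd_coe]
        rw [hg _ (inv_pos.2 hx), inv_pow]
        field_simp

end PolarCoordinates

section EuclideanSpace

variable {ι : Type*} [Fintype ι]

lemma EuclideanSpace.integral_prod_pow_mul_exp_neg_norm_sq (c : ι → ℕ) :
    ∫ x : EuclideanSpace ℝ ι, (∏ t, x t ^ c t) * rexp (-‖x‖ ^ 2) =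
      ∏ t, gaussianMoment (c t) := by
  simp only [gaussianMoment]
  rw [← (EuclideanSpace.volume_preserving_symm_measurableEquiv_toLp ι).symm.integral_comp
      (MeasurableEquiv.toLp 2 (ι → ℝ)).measurableEmbedding, volume_pi,
    ← integral_fintype_prod_eq_prod fun t s => s ^ c t * rexp (-s ^ 2)]
  congr 1
  ext y
  simp [EuclideanSpace.norm_sq_eq, ← Finset.sum_neg_distrib, exp_sum, Finset.prod_mul_distrib]

theorem EuclideanSpace.integral_toSphere_prod_pow [Nonempty ι] (c : ι → ℕ) :
    (∫ ω : sphere (0 : EuclideanSpace ℝ ι) 1, ∏ t, (ω : EuclideanSpace ℝ ι) t ^ c t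
        ∂volume.toSphere) * (Gamma (((∑ t, c t : ℕ) + Fintype.card ι) / 2) / 2) =
      ∏ t, gaussianMoment (c t) := by
  rw [← finrank_euclideanSpace (𝕜 := ℝ), ← integral_mul_exp_neg_norm_sq_of_homogeneous volume
      (g := fun x : EuclideanSpace ℝ ι => ∏ t, x t ^ c t),
    EuclideanSpace.integral_prod_pow_mul_exp_neg_norm_sq]
  intro a _ x
  simp [mul_pow, Finset.prod_mul_distrib, Finset.prod_pow_eq_pow_sum]

lemma prod_pow_single_one [DecidableEq ι] {M : Type*} [CommMonoid M] (x : ι → M) (i : ι) :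
    ∏ t, x t ^ (Pi.single i 1 : ι → ℕ) t = x i := by
  simp [Pi.single_apply, pow_ite]

lemma Matrix.sum_mul_mul_pairings [DecidableEq ι] {R : Type*} [CommSemiring R]
    (k : Matrix ι ι R) :
    ∑ i, ∑ j, ∑ l, ∑ m, k i j * k l m *
        ((if i = j then 1 else 0) * (if l = m then 1 else 0) +
          (if i = l then 1 else 0) * (if j = m then 1 else 0) +
          (if i = m then 1 else 0) * (if j = l then 1 else 0)) =
      k.trace ^ 2 + ∑ i, ∑ j, k i j * k i j + ∑ i, ∑ j, k i j * k j i := by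
  simp [mul_add, Finset.sum_add_distrib, Matrix.trace, sq, Finset.sum_mul_sum]

def quadForm (k : Matrix ι ι ℝ) (x : EuclideanSpace ℝ ι) : ℝ :=
  ∑ i, ∑ j, k i j * x i * x j

lemma continuous_quadForm (k : Matrix ι ι ℝ) : Continuous (quadForm k) := by
  unfold quadForm
  fun_prop

lemma quadForm_sq (k : Matrix ι ι ℝ) (x : EuclideanSpace ℝ ι) :
    quadForm k x ^ 2 = ∑ i, ∑ j, ∑ l, ∑ m, k i j * k l m * (x i * x j * x l * x m) := by
  simp only [quadForm, sq, Finset.sum_mul, Finset.mul_sum]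
  refine Finset.sum_congr rfl fun i _ => Finset.sum_congr rfl fun j _ =>
    Finset.sum_congr rfl fun l _ => Finset.sum_congr rfl fun m _ => by ring

end EuclideanSpace

local notation "ℝ³" => EuclideanSpace ℝ (Fin 3)

lemma integral_sphereMeasure2 (f : ℝ³ → ℝ) :
    ∫ x, f x ∂sphereMeasure2 = ∫ ω, f ω ∂(volume : Measure ℝ³).toSphere :=
  (MeasurableEmbedding.subtype_coe isClosed_sphere.measurableSet).integral_map f

lemma Continuous.integrable_sphereMeasure2 {f : ℝ³ → ℝ} (hf : Continuous f) :
    Integrable f sphereMeasure2 := by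
  rw [sphereMeasure2,
    (MeasurableEmbedding.subtype_coe isClosed_sphere.measurableSet).integrable_map_iff]
  exact (hf.comp continuous_subtype_val).integrable_of_hasCompactSupport (.of_compactSpace _)

lemma integral_finsetSum_sphereMeasure2 {α : Type*} (s : Finset α) {f : α → ℝ³ → ℝ}
    (hf : ∀ a ∈ s, Continuous (f a)) :
    ∫ x, ∑ a ∈ s, f a x ∂sphereMeasure2 = ∑ a ∈ s, ∫ x, f a x ∂sphereMeasure2 :=
  integral_finsetSum s fun a ha => (hf a ha).integrable_sphereMeasure2

lemma sphereMeasure2_real_univ : sphereMeasure2.real univ = 4 * π := by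
  rw [measureReal_def, sphereMeasure2, Measure.map_apply measurable_subtype_coe MeasurableSet.univ,
    preimage_univ, Measure.toSphere_apply_univ, EuclideanSpace.volume_ball_fin_three]
  simp only [finrank_euclideanSpace, Fintype.card_fin, Nat.cast_ofNat, ENNReal.ofReal_one, one_pow,
    one_mul, ENNReal.toReal_mul, ENNReal.toReal_ofNat]
  rw [ENNReal.toReal_ofReal (by positivity)]
  ring

lemma integral_sphereMeasure2_prod_pow {c : Fin 3 → ℕ} {n : ℕ} (hc : ∑ t, c t = n) :
    ∫ x, ∏ t, x t ^ c t ∂sphereMeasure2 =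
      2 * (∏ t, gaussianMoment (c t)) / Gamma ((n + 3) / 2) := by
  have hΓ : 0 < Gamma ((n + 3) / 2) := Gamma_pos_of_pos (by positivity)
  rw [eq_div_iff hΓ.ne', integral_sphereMeasure2, ← EuclideanSpace.integral_toSphere_prod_pow,
    Fintype.card_fin, hc, Nat.cast_ofNat]
  ring

lemma prod_gaussianMoment_single_add_single (i j : Fin 3) :
    ∏ t, gaussianMoment ((Pi.single i 1 : Fin 3 → ℕ) t + (Pi.single j 1 : Fin 3 → ℕ) t) =
      if i = j then √π ^ 3 / 2 else 0 := by
  fin_cases i <;> fin_cases j <;>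
    simp [Fin.prod_univ_three, gaussianMoment_zero, gaussianMoment_one, gaussianMoment_two] <;> ring

lemma integral_sphereMeasure2_mul (i j : Fin 3) :
    ∫ x, x i * x j ∂sphereMeasure2 = 4 * π / 3 * if i = j then 1 else 0 := by
  have h := integral_sphereMeasure2_prod_pow (c := Pi.single i 1 + Pi.single j 1) (n := 2)
    (by simp [Finset.sum_add_distrib])
  simp only [Pi.add_apply, pow_add, Finset.prod_mul_distrib, prod_pow_single_one] at h
  rw [h, prod_gaussianMoment_single_add_single, show ((2 : ℕ) + 3 : ℝ) / 2 = 5 / 2 by norm_num,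
    Gamma_five_halves, sqrt_pi_pow_three]
  have hsqrtπ : √π ≠ 0 := (sqrt_pos.2 pi_pos).ne'
  split_ifs
  · field_simp
  · simp

lemma prod_gaussianMoment_single_add_single_add_single_add_single (i j l m : Fin 3) :
    ∏ t, gaussianMoment ((Pi.single i 1 : Fin 3 → ℕ) t + (Pi.single j 1 : Fin 3 → ℕ) t +
        (Pi.single l 1 : Fin 3 → ℕ) t + (Pi.single m 1 : Fin 3 → ℕ) t) =
      ((if i = j then 1 else 0) * (if l = m then 1 else 0) +
        (if i = l then 1 else 0) * (if j = m then 1 else 0) +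
        (if i = m then 1 else 0) * (if j = l then 1 else 0)) * (√π ^ 3 / 4) := by
  fin_cases i <;> fin_cases j <;> fin_cases l <;> fin_cases m <;>
    simp [Fin.prod_univ_three, gaussianMoment_zero, gaussianMoment_one, gaussianMoment_two,
      gaussianMoment_three, gaussianMoment_four] <;> ring

lemma integral_sphereMeasure2_mul_mul_mul (i j l m : Fin 3) :
    ∫ x, x i * x j * x l * x m ∂sphereMeasure2 =
      4 * π / 15 * ((if i = j then 1 else 0) * (if l = m then 1 else 0) +
        (if i = l then 1 else 0) * (if j = m then 1 else 0) +
        (if i = m then 1 else 0) * (if j = l then 1 else 0)) := by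
  have h := integral_sphereMeasure2_prod_pow
    (c := Pi.single i 1 + Pi.single j 1 + Pi.single l 1 + Pi.single m 1) (n := 4)
    (by simp [Finset.sum_add_distrib])
  simp only [Pi.add_apply, pow_add, Finset.prod_mul_distrib, prod_pow_single_one] at h
  rw [h, prod_gaussianMoment_single_add_single_add_single_add_single,
    show ((4 : ℕ) + 3 : ℝ) / 2 = 7 / 2 by norm_num, Gamma_seven_halves, sqrt_pi_pow_three]
  have hsqrtπ : √π ≠ 0 := (sqrt_pos.2 pi_pos).ne'
  field_simp
  ring

lemma integral_sphereMeasure2_quadForm (k : Matrix (Fin 3) (Fin 3) ℝ) :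
    ∫ x, quadForm k x ∂sphereMeasure2 = 4 * π / 3 * k.trace := by
  simp (disch := intros; fun_prop) only [quadForm, integral_finsetSum_sphereMeasure2, mul_assoc,
    integral_const_mul, integral_sphereMeasure2_mul]
  simp [Matrix.trace, Finset.mul_sum, mul_comm]

lemma integral_sphereMeasure2_quadForm_sq {k : Matrix (Fin 3) (Fin 3) ℝ} (hk : k.IsSymm) :
    ∫ x, quadForm k x ^ 2 ∂sphereMeasure2 =
      4 * π / 15 * (k.trace ^ 2 + 2 * ∑ i, ∑ j, k i j ^ 2) := by
  simp (disch := intros; fun_prop) only [quadForm_sq, integral_finsetSum_sphereMeasure2,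
    integral_const_mul, integral_sphereMeasure2_mul_mul_mul]
  simp only [mul_left_comm _ (4 * π / 15), ← Finset.mul_sum, Matrix.sum_mul_mul_pairings,
    hk.apply, ← sq]
  ring

lemma integral_sphereMeasure2_const_sub_sq (a c : ℝ) {f : ℝ³ → ℝ} (hf : Continuous f) :
    ∫ x, (a - (c - f x) ^ 2) ∂sphereMeasure2 =
      4 * π * (a - c ^ 2) + 2 * c * ∫ x, f x ∂sphereMeasure2 - ∫ x, f x ^ 2 ∂sphereMeasure2 := by
  have hexpand : ∀ x, a - (c - f x) ^ 2 = (a - c ^ 2) + 2 * c * f x - f x ^ 2 := fun x => by ring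
  simp only [hexpand]
  rw [integral_sub, integral_add, integral_const, integral_const_mul, smul_eq_mul,
    sphereMeasure2_real_univ]
  all_goals exact Continuous.integrable_sphereMeasure2 (by fun_prop)

lemma sphereMeasureR_univ_toReal (r : ℝ) :
    (sphereMeasureR r univ).toReal = 4 * π * r ^ 2 := by
  rw [sphereMeasureR, Measure.map_apply (continuous_const_smul r).measurable MeasurableSet.univ,
    preimage_univ, Measure.smul_apply, smul_eq_mul, ENNReal.toReal_mul,
    ENNReal.toReal_ofReal (sq_nonneg r), ← measureReal_def, sphereMeasure2_real_univ]
  ring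

lemma integral_sphereMeasureR {r : ℝ} (hr : r ≠ 0) (f : ℝ³ → ℝ) :
    ∫ x, f x ∂sphereMeasureR r = r ^ 2 * ∫ x, f (r • x) ∂sphereMeasure2 := by
  rw [sphereMeasureR, (measurableEmbedding_const_smul₀ hr).integral_map,
    integral_smul_measure, ENNReal.toReal_ofReal (sq_nonneg r), smul_eq_mul]

lemma traceRestricted_smul (k : Matrix (Fin 3) (Fin 3) ℝ) {r : ℝ} (hr : r ≠ 0) (x : ℝ³) :
    traceRestricted k r (r • x) = k.trace - quadForm k x := by
  simp [traceRestricted, quadForm, hr, mul_assoc]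

/-- Flat-space leading order expansion of the Hawking energy on round spheres:
`𝓔(S_r) = (r³/12) ((3/5)(tr k)² + (1/5)‖k‖²)` exactly. -/
theorem hawking_energy_flat_sphere (k : Matrix (Fin 3) (Fin 3) ℝ) (hk : k.IsSymm)
    (r : ℝ) (hr : 0 < r) :
    hawkingEnergy k r =
      r ^ 3 / 12 * (3 / 5 * k.trace ^ 2 + 1 / 5 * ∑ i, ∑ j, (k i j) ^ 2) := by
  have hsqrt : √((sphereMeasureR r univ).toReal / (16 * π)) = r / 2 := by
    rw [sphereMeasureR_univ_toReal, ← sqrt_sq (by positivity : 0 ≤ r / 2)]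
    congr 1
    field_simp
    ring
  rw [hawkingEnergy, hsqrt, integral_sphereMeasureR hr.ne']
  simp only [traceRestricted_smul k hr.ne']
  rw [integral_sphereMeasure2_const_sub_sq _ _ (continuous_quadForm k),
    integral_sphereMeasure2_quadForm, integral_sphereMeasure2_quadForm_sq hk]
  field_simp
  ring
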